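/- Stuttering lemma for the full epistemic language: for all call sequences σ₁, σ₂, calls c, and formulas φ of the language L (built from F_a S, negation, conjunction, and K_a), σ₁.c.σ₂ ⊨ φ iff σ₁.c.c.σ₂ ⊨ φ. -/

import Mathlib

/-- A call is an ordered pair of distinct agents (caller, callee). -/
def Call (n : ℕ) : Type := {p : Fin n × Fin n // p.1 ≠ p.2}

namespace Gossip

variable {n : ℕ}

/-- The caller of a call. -/
def caller (c : Call n) : Fin n := c.1.1

/-- The callee of a call. -/
def callee (c : Call n) : Fin n := c.1.2

/-- Agent `a` is involved in call `c`. -/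
def involves (c : Call n) (a : Fin n) : Prop := a = caller c ∨ a = callee c

/-- A gossip situation assigns to each agent the set of secrets it is familiar with;
secrets are identified with the agents holding them. -/
def Situation (n : ℕ) := Fin n → Finset (Fin n)

/-- The initial gossip situation: every agent only holds its own secret. -/
def root : Situation n := fun a => {a}

/-- The effect of a call on a gossip situation: caller and callee share their secrets. -/
def applyCall (c : Call n) (s : Situation n) : Situation n :=
  fun x => if x = caller c ∨ x = callee c then s (caller c) ∪ s (callee c) else s x

/-- The effect of a call sequence on a gossip situation. -/
def applySeq (σ : List (Call n)) (s : Situation n) : Situation n :=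
  σ.foldl (fun t c => applyCall c t) s

end Gossip

open Gossip

namespace Gossip

/-- The indistinguishability relation `∼ₐ`: the smallest equivalence relation on call
sequences such that calls not involving `a` can be appended on either side, and a call
involving `a` can be appended on both sides provided `a` observes the same secrets. -/
inductive Indist {n : ℕ} (a : Fin n) : List (Call n) → List (Call n) → Prop where
  | refl (σ : List (Call n)) : Indist a σ σ
  | symm {σ τ : List (Call n)} : Indist a σ τ → Indist a τ σ
  | trans {σ τ υ : List (Call n)} : Indist a σ τ → Indist a τ υ → Indist a σ υ
  | skip_left {σ τ : List (Call n)} {c : Call n} :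
      Indist a σ τ → ¬ involves c a → Indist a (σ ++ [c]) τ
  | skip_right {σ τ : List (Call n)} {c : Call n} :
      Indist a σ τ → ¬ involves c a → Indist a σ (τ ++ [c])
  | call {σ τ : List (Call n)} {c : Call n} :
      Indist a σ τ → involves c a →
      applySeq (σ ++ [c]) root a = applySeq (τ ++ [c]) root a →
      Indist a (σ ++ [c]) (τ ++ [c])

/-- Formulas of the language `L`: atomic formulas `F_a S`, negation, conjunction and
the knowledge modalities `K_a`. -/
inductive Form (n : ℕ) : Type where
  | F : Fin n → Fin n → Form n
  | neg : Form n → Form n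
  | and : Form n → Form n → Form n
  | K : Fin n → Form n → Form n

/-- Truth of a formula after a call sequence. -/
def sat {n : ℕ} : List (Call n) → Form n → Prop
  | σ, .F a S => S ∈ applySeq σ root a
  | σ, .neg φ => ¬ sat σ φ
  | σ, .and φ ψ => sat σ φ ∧ sat σ ψ
  | σ, .K a φ => ∀ τ, Indist a σ τ → sat τ φ

end Gossip

/-!
Two call sequences are `∼ₓ`-indistinguishable iff they give `x` the same *view*: the list of
calls `x` took part in, each paired with the secrets `x` held right after it. The lemma is proved
by induction on `φ` for a more general relation: `c` may be repeated not only at once but after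
any stretch during which neither participant of `c` learns a secret. Only `K_x` with `x` in `c`
needs work. A sequence with the same `x`-view as the repeated form splits at the two entries for
`c`; the stretch between them is again quiet, and dropping the second `c` gives a sequence with
the `x`-view of the original. Conversely, after a sequence `ρ.c.δ` with the `x`-view of the
original, `x` holds the same set `X` during the stretch of `δ` matching the quiet one. Reorder
that stretch: calls whose participants stay within `X` first, the others after; the latter avoid
`x` and everyone the former touch, so every agent's view is unchanged. Repeating `c` after the
first block is then quiet and gives the `x`-view of the repeated form.
-/

namespace Gossip

variable {n : ℕ}

instance (c : Call n) (x : Fin n) : Decidable (involves c x) :=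
  inferInstanceAs (Decidable (x = caller c ∨ x = callee c))

section Situation

variable {c r u : Call n} {s : Situation n} {x y : Fin n}

lemma involves_caller (c : Call n) : involves c (caller c) := Or.inl rfl

lemma involves_callee (c : Call n) : involves c (callee c) := Or.inr rfl

lemma applyCall_of_involves (h : involves c x) :
    applyCall c s x = s (caller c) ∪ s (callee c) := if_pos h

lemma applyCall_of_not_involves (h : ¬ involves c x) : applyCall c s x = s x := if_neg h

lemma applyCall_eq_of_involves (hx : involves c x) (hy : involves c y) :
    applyCall c s x = applyCall c s y := by
  rw [applyCall_of_involves hx, applyCall_of_involves hy]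

lemma subset_applyCall (c : Call n) (s : Situation n) (x : Fin n) : s x ⊆ applyCall c s x := by
  by_cases h : involves c x
  · rw [applyCall_of_involves h]
    rcases h with rfl | rfl
    exacts [Finset.subset_union_left, Finset.subset_union_right]
  · rw [applyCall_of_not_involves h]

lemma applyCall_eq_self_of_eq (h : s (caller c) = s (callee c)) : applyCall c s = s := by
  funext z
  by_cases hz : involves c z
  · rw [applyCall_of_involves hz, h, Finset.union_self]
    rcases hz with rfl | rfl
    exacts [h.symm, rfl]
  · exact applyCall_of_not_involves hz

lemma applyCall_comm (h : ∀ z, involves r z → ¬ involves u z) :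
    applyCall u (applyCall r s) = applyCall r (applyCall u s) := by
  have hu (z) (hz : involves u z) : applyCall r s z = s z :=
    applyCall_of_not_involves fun hr => h z hr hz
  have hr (z) (hz : involves r z) : applyCall u s z = s z := applyCall_of_not_involves (h z hz)
  funext z
  by_cases hzu : involves u z
  · rw [applyCall_of_involves hzu, applyCall_of_not_involves fun hzr => h z hzr hzu,
      applyCall_of_involves hzu, hu _ (involves_caller u), hu _ (involves_callee u)]
  · by_cases hzr : involves r z
    · rw [applyCall_of_not_involves hzu, applyCall_of_involves hzr, applyCall_of_involves hzr,
        hr _ (involves_caller r), hr _ (involves_callee r)]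
    · rw [applyCall_of_not_involves hzu, applyCall_of_not_involves hzr,
        applyCall_of_not_involves hzr, applyCall_of_not_involves hzu]

@[simp] lemma applySeq_cons (c : Call n) (σ : List (Call n)) (s : Situation n) :
    applySeq (c :: σ) s = applySeq σ (applyCall c s) := rfl

lemma applySeq_append (σ τ : List (Call n)) (s : Situation n) :
    applySeq (σ ++ τ) s = applySeq τ (applySeq σ s) := List.foldl_append

lemma applySeq_append_cons (σ τ : List (Call n)) (c : Call n) (s : Situation n) :
    applySeq (σ ++ c :: τ) s = applySeq τ (applyCall c (applySeq σ s)) := List.foldl_append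

lemma applySeq_concat (σ : List (Call n)) (c : Call n) (s : Situation n) :
    applySeq (σ ++ [c]) s = applyCall c (applySeq σ s) := List.foldl_append

lemma subset_applySeq (σ : List (Call n)) (s : Situation n) (x : Fin n) :
    s x ⊆ applySeq σ s x := by
  induction σ generalizing s with
  | nil => exact subset_rfl
  | cons c σ ih => exact (subset_applyCall c s x).trans (ih _)

end Situation

section View

variable {c : Call n} {σ τ : List (Call n)} {s s' : Situation n} {x : Fin n}

def view (s : Situation n) : List (Call n) → Fin n → List (Call n × Finset (Fin n))
  | [], _ => []
  | c :: σ, x =>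
      if involves c x then (c, applyCall c s x) :: view (applyCall c s) σ x
      else view (applyCall c s) σ x

@[simp] lemma view_nil (s : Situation n) (x : Fin n) : view s [] x = [] := rfl

lemma view_cons_of_involves (h : involves c x) :
    view s (c :: σ) x = (c, applyCall c s x) :: view (applyCall c s) σ x := if_pos h

lemma view_cons_of_not_involves (h : ¬ involves c x) :
    view s (c :: σ) x = view (applyCall c s) σ x := if_neg h

lemma view_append (σ τ : List (Call n)) (s : Situation n) (x : Fin n) :
    view s (σ ++ τ) x = view s σ x ++ view (applySeq σ s) τ x := by
  induction σ generalizing s with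
  | nil => rfl
  | cons c σ ih =>
    by_cases h : involves c x
    · rw [List.cons_append, view_cons_of_involves h, view_cons_of_involves h, ih]
      rfl
    · rw [List.cons_append, view_cons_of_not_involves h, view_cons_of_not_involves h, ih]
      rfl

lemma view_append_cons_of_involves (h : involves c x) :
    view s (σ ++ c :: τ) x = view s σ x ++
      (c, applyCall c (applySeq σ s) x) :: view (applyCall c (applySeq σ s)) τ x := by
  rw [view_append, view_cons_of_involves h]

lemma view_append_cons_of_not_involves (h : ¬ involves c x) :
    view s (σ ++ c :: τ) x = view s σ x ++ view (applyCall c (applySeq σ s)) τ x := by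
  rw [view_append, view_cons_of_not_involves h]

lemma view_eq_nil_iff : view s σ x = [] ↔ ∀ c ∈ σ, ¬ involves c x := by
  induction σ generalizing s with
  | nil => simp
  | cons c σ ih =>
    by_cases h : involves c x
    · simp [view_cons_of_involves h, h]
    · simp [view_cons_of_not_involves h, ih, h]

lemma applySeq_apply_eq_foldl_view (σ : List (Call n)) (s : Situation n) (x : Fin n) :
    applySeq σ s x = (view s σ x).foldl (fun _ e => e.2) (s x) := by
  induction σ generalizing s with
  | nil => rfl
  | cons c σ ih =>
    by_cases h : involves c x
    · rw [applySeq_cons, view_cons_of_involves h, List.foldl_cons, ih]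
    · rw [applySeq_cons, view_cons_of_not_involves h, ih, applyCall_of_not_involves h]

lemma applySeq_apply_eq_of_view_eq (hs : s x = s' x) (h : view s σ x = view s' τ x) :
    applySeq σ s x = applySeq τ s' x := by
  rw [applySeq_apply_eq_foldl_view, applySeq_apply_eq_foldl_view, hs, h]

lemma applySeq_eq_of_view_eq (h : view s σ = view s τ) : applySeq σ s = applySeq τ s :=
  funext fun z => applySeq_apply_eq_of_view_eq rfl (congrFun h z)

lemma applySeq_apply_of_forall_not_involves (h : ∀ c ∈ σ, ¬ involves c x) :
    applySeq σ s x = s x := by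
  rw [applySeq_apply_eq_foldl_view, view_eq_nil_iff.2 h, List.foldl_nil]

lemma view_append_congr (h : view s σ = view s τ) (ρ : List (Call n)) :
    view s (σ ++ ρ) = view s (τ ++ ρ) :=
  funext fun z => by rw [view_append, view_append, h, applySeq_eq_of_view_eq h]

lemma view_append_left_congr (ρ : List (Call n))
    (h : view (applySeq ρ s) σ = view (applySeq ρ s) τ) : view s (ρ ++ σ) = view s (ρ ++ τ) :=
  funext fun z => by rw [view_append, view_append, h]

lemma exists_append_of_view_eq_append {A B : List (Call n × Finset (Fin n))}
    (h : view s σ x = A ++ B) :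
    ∃ σ₁ σ₂, σ = σ₁ ++ σ₂ ∧ view s σ₁ x = A ∧ view (applySeq σ₁ s) σ₂ x = B := by
  induction σ generalizing s A with
  | nil =>
    obtain ⟨rfl, rfl⟩ := List.append_eq_nil_iff.1 h.symm
    exact ⟨[], [], rfl, rfl, rfl⟩
  | cons d σ ih =>
    rcases A with _ | ⟨e, A⟩
    · exact ⟨[], d :: σ, rfl, rfl, h⟩
    by_cases hd : involves d x
    · rw [view_cons_of_involves hd, List.cons_append, List.cons_eq_cons] at h
      obtain ⟨σ₁, σ₂, rfl, hA, hB⟩ := ih h.2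
      exact ⟨d :: σ₁, σ₂, rfl, by rw [view_cons_of_involves hd, hA, h.1], hB⟩
    · rw [view_cons_of_not_involves hd] at h
      obtain ⟨σ₁, σ₂, rfl, hA, hB⟩ := ih h
      exact ⟨d :: σ₁, σ₂, rfl, by rw [view_cons_of_not_involves hd, hA], hB⟩

lemma exists_append_cons_of_view_eq {A B : List (Call n × Finset (Fin n))}
    {v : Finset (Fin n)} (h : view s σ x = A ++ (c, v) :: B) :
    ∃ σ₁ σ₂, σ = σ₁ ++ c :: σ₂ ∧ view s σ₁ x = A ∧ involves c x ∧
      applyCall c (applySeq σ₁ s) x = v ∧ view (applyCall c (applySeq σ₁ s)) σ₂ x = B := by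
  induction σ generalizing s A with
  | nil => simp at h
  | cons d σ ih =>
    by_cases hd : involves d x
    · rw [view_cons_of_involves hd] at h
      rcases A with _ | ⟨e, A⟩
      · obtain ⟨⟨rfl, rfl⟩, rfl⟩ := List.cons_eq_cons.1 h |>.imp_left Prod.mk.inj
        exact ⟨[], σ, rfl, rfl, hd, rfl, rfl⟩
      · rw [List.cons_append, List.cons_eq_cons] at h
        obtain ⟨σ₁, σ₂, rfl, hA, hc, hv, hB⟩ := ih h.2
        exact ⟨d :: σ₁, σ₂, rfl, by rw [view_cons_of_involves hd, hA, h.1], hc, hv, hB⟩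
    · rw [view_cons_of_not_involves hd] at h
      obtain ⟨σ₁, σ₂, rfl, hA, hc, hv, hB⟩ := ih h
      exact ⟨d :: σ₁, σ₂, rfl, by rw [view_cons_of_not_involves hd, hA], hc, hv, hB⟩

end View

section Indist

variable {x : Fin n} {σ τ : List (Call n)}

lemma Indist.view_eq (h : Indist x σ τ) : view root σ x = view root τ x := by
  induction h with
  | refl => rfl
  | symm _ ih => exact ih.symm
  | trans _ _ ih₁ ih₂ => exact ih₁.trans ih₂
  | skip_left _ hc ih | skip_right _ hc ih =>
    rwa [view_append_cons_of_not_involves hc, view_nil, List.append_nil]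
  | call _ hc hval ih =>
    rw [view_append_cons_of_involves hc, view_append_cons_of_involves hc, ih, view_nil, view_nil,
      ← applySeq_concat, ← applySeq_concat, hval]

lemma Indist.append_right {ρ : List (Call n)} (h : Indist x σ τ)
    (hρ : ∀ c ∈ ρ, ¬ involves c x) : Indist x σ (τ ++ ρ) := by
  induction ρ using List.reverseRecOn with
  | nil => simpa
  | append_singleton ρ c ih =>
    rw [← List.append_assoc]
    exact (ih fun d hd => hρ d (by simp [hd])).skip_right (hρ c (by simp))

lemma indist_of_view_eq (h : view root σ x = view root τ x) : Indist x σ τ := by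
  induction σ using List.reverseRecOn generalizing τ with
  | nil => simpa using (Indist.refl (a := x) []).append_right (view_eq_nil_iff.1 h.symm)
  | append_singleton σ c ih =>
    by_cases hc : involves c x
    · rw [view_append_cons_of_involves hc, view_nil] at h
      obtain ⟨τ₁, τ₂, rfl, h₁, -, hv, h₂⟩ := exists_append_cons_of_view_eq h.symm
      have := (ih h₁.symm).call hc (by rw [applySeq_concat, applySeq_concat, hv])
      simpa using this.append_right (view_eq_nil_iff.1 h₂)
    · rw [view_append_cons_of_not_involves hc, view_nil, List.append_nil] at h
      exact (ih h).skip_left hc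

theorem indist_iff_view_eq : Indist x σ τ ↔ view root σ x = view root τ x :=
  ⟨Indist.view_eq, indist_of_view_eq⟩

lemma sat_K_iff {φ : Form n} : sat σ (.K x φ) ↔ ∀ τ, view root σ x = view root τ x → sat τ φ :=
  forall_congr' fun _ => imp_congr_left indist_iff_view_eq

lemma sat_iff_of_view_eq (h : view root σ = view root τ) (φ : Form n) : sat σ φ ↔ sat τ φ := by
  induction φ with
  | F a S =>
    show S ∈ applySeq σ root a ↔ S ∈ applySeq τ root a
    rw [applySeq_eq_of_view_eq h]
  | neg φ ih => exact not_congr ih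
  | and φ ψ ihφ ihψ => exact and_congr ihφ ihψ
  | K a φ => simp only [sat_K_iff, h]

end Indist

section Reorder

variable {r : Call n} {U : List (Call n)} {s : Situation n}

lemma view_pair_comm {u : Call n} (h : ∀ z, involves r z → ¬ involves u z) :
    view s [r, u] = view s [u, r] := by
  have hc := applyCall_comm (s := s) h
  funext z
  by_cases hzr : involves r z
  · have hzu := h z hzr
    rw [view_cons_of_involves hzr, view_cons_of_not_involves hzu, view_cons_of_not_involves hzu,
      view_cons_of_involves hzr, ← hc, applyCall_of_not_involves hzu]
  · by_cases hzu : involves u z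
    · rw [view_cons_of_not_involves hzr, view_cons_of_involves hzu, view_cons_of_involves hzu,
        view_cons_of_not_involves hzr, hc, applyCall_of_not_involves hzr]
    · rw [view_cons_of_not_involves hzr, view_cons_of_not_involves hzu,
        view_cons_of_not_involves hzu, view_cons_of_not_involves hzr, view_nil, view_nil]

lemma view_concat_comm (hU : ∀ u ∈ U, ∀ z, involves r z → ¬ involves u z) :
    view s (U ++ [r]) = view s (r :: U) := by
  induction U generalizing s with
  | nil => rfl
  | cons u U ih =>
    calc view s (u :: U ++ [r])
        = view s (u :: r :: U) :=
          view_append_left_congr [u] (ih fun v hv => hU v (.tail _ hv))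
      _ = view s (r :: u :: U) := view_append_congr (view_pair_comm (hU u (.head _))).symm U

def Confined (X : Finset (Fin n)) (s : Situation n) (U : List (Call n)) : Prop :=
  ∀ u ∈ U, ∀ z, involves u z → applySeq U s z ⊆ X

lemma Confined.applySeq_subset {X : Finset (Fin n)} {z : Fin n} (hU : Confined X s U)
    (hz : s z ⊆ X) : applySeq U s z ⊆ X := by
  by_cases h : ∃ u ∈ U, involves u z
  · obtain ⟨u, hu, huz⟩ := h
    exact hU u hu z huz
  · push Not at h
    rwa [applySeq_apply_of_forall_not_involves h]

lemma exists_confined_append (X : Finset (Fin n)) (δ : List (Call n)) (s : Situation n) :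
    ∃ U I, view s (U ++ I) = view s δ ∧ Confined X s U ∧
      ∀ r ∈ I, ∀ z, involves r z → ¬ applySeq δ s z ⊆ X := by
  induction δ generalizing s with
  | nil => exact ⟨[], [], rfl, by simp [Confined], by simp⟩
  | cons r δ ih =>
    obtain ⟨U, I, hUI, hU, hI⟩ := ih (applyCall r s)
    by_cases hr : ∀ z, involves r z → applyCall r s z ⊆ X
    · refine ⟨r :: U, I, view_append_left_congr [r] hUI, ?_, hI⟩
      rintro u (_ | ⟨_, hu⟩) z hz
      · exact hU.applySeq_subset (hr z hz)
      · exact hU u hu z hz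
    · push Not at hr
      obtain ⟨z₀, hz₀, hX⟩ := hr
      have hout (z) (hz : involves r z) : ¬ applyCall r s z ⊆ X := by
        rwa [applyCall_eq_of_involves hz hz₀]
      have hdisj : ∀ u ∈ U, ∀ z, involves r z → ¬ involves u z := fun u hu z hz huz =>
        hout z hz ((subset_applySeq U _ z).trans (hU u hu z huz))
      have hcomm := view_concat_comm (s := s) hdisj
      refine ⟨U, r :: I, ?_, ?_, ?_⟩
      · rw [← List.singleton_append, ← List.append_assoc, view_append_congr hcomm]
        exact view_append_left_congr [r] hUI
      · intro u hu z hz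
        have := hU u hu z hz
        rwa [← applySeq_cons, ← applySeq_eq_of_view_eq hcomm, applySeq_concat,
          applyCall_of_not_involves fun hrz => hdisj u hu z hrz hz] at this
      · rintro r' (_ | ⟨_, hr'⟩) z hz
        · exact fun hsub => hout z hz ((subset_applySeq δ _ z).trans hsub)
        · exact hI r' hr' z hz

end Reorder

section Stutter

variable {c : Call n} {s : Situation n} {α : List (Call n)} {x : Fin n}

def Quiet (c : Call n) (t : Situation n) (α : List (Call n)) : Prop :=
  ∀ y, involves c y → applySeq α t y ⊆ t y

lemma Quiet.applySeq_eq {t : Situation n} {y : Fin n} (hq : Quiet c t α) (hy : involves c y) :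
    applySeq α t y = t y :=
  (hq y hy).antisymm (subset_applySeq α t y)

lemma Quiet.applyCall_eq_self (hq : Quiet c (applyCall c s) α) :
    applyCall c (applySeq α (applyCall c s)) = applySeq α (applyCall c s) :=
  applyCall_eq_self_of_eq <| by
    rw [hq.applySeq_eq (involves_caller c), hq.applySeq_eq (involves_callee c),
      applyCall_eq_of_involves (involves_caller c) (involves_callee c)]

lemma Quiet.view_append_cons (hq : Quiet c (applyCall c s) α) (hx : involves c x)
    (β : List (Call n)) :
    view (applyCall c s) (α ++ c :: β) x = view (applyCall c s) α x ++
      (c, applyCall c s x) :: view (applySeq α (applyCall c s)) β x := by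
  rw [view_append_cons_of_involves hx, hq.applyCall_eq_self, hq.applySeq_eq hx]

def Stutter (c : Call n) (σ τ : List (Call n)) : Prop :=
  ∃ α₁ α₂ β, Quiet c (applyCall c (applySeq α₁ root)) α₂ ∧
    σ = α₁ ++ c :: (α₂ ++ β) ∧ τ = α₁ ++ c :: (α₂ ++ c :: β)

variable {σ τ : List (Call n)}

lemma Stutter.applySeq_eq (h : Stutter c σ τ) : applySeq σ root = applySeq τ root := by
  obtain ⟨α₁, α₂, β, hq, rfl, rfl⟩ := h
  rw [applySeq_append_cons, applySeq_append_cons, applySeq_append, applySeq_append_cons,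
    hq.applyCall_eq_self]

lemma Stutter.view_eq_of_not_involves (h : Stutter c σ τ) (hx : ¬ involves c x) :
    view root σ x = view root τ x := by
  obtain ⟨α₁, α₂, β, hq, rfl, rfl⟩ := h
  rw [view_append_cons_of_not_involves hx, view_append_cons_of_not_involves hx, view_append,
    view_append_cons_of_not_involves hx, hq.applyCall_eq_self]

lemma Stutter.exists_of_view_eq_right {τ' : List (Call n)} (h : Stutter c σ τ)
    (hx : involves c x) (hτ' : view root τ x = view root τ' x) :
    ∃ σ', view root σ x = view root σ' x ∧ Stutter c σ' τ' := by
  obtain ⟨α₁, α₂, β, hq, rfl, rfl⟩ := h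
  rw [view_append_cons_of_involves hx, hq.view_append_cons hx] at hτ'
  obtain ⟨ρ₁, δ, rfl, hρ₁, -, hv₁, hδ⟩ := exists_append_cons_of_view_eq hτ'.symm
  obtain ⟨ρ₂, κ, rfl, hρ₂, -, hv₂, hκ⟩ := exists_append_cons_of_view_eq hδ
  have hq' : Quiet c (applyCall c (applySeq ρ₁ root)) ρ₂ := fun y hy =>
    calc _ ⊆ applyCall c (applySeq ρ₂ (applyCall c (applySeq ρ₁ root))) y := subset_applyCall ..
      _ = applyCall c (applySeq ρ₁ root) y := by
        rw [applyCall_eq_of_involves hy hx, hv₂, ← hv₁, applyCall_eq_of_involves hx hy]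
  refine ⟨ρ₁ ++ c :: (ρ₂ ++ κ), ?_, ρ₁, ρ₂, κ, hq', rfl, rfl⟩
  rw [view_append_cons_of_involves hx, view_append_cons_of_involves hx, view_append,
    view_append, hρ₁, hv₁, hρ₂, ← hκ, hq'.applyCall_eq_self]

lemma Stutter.exists_of_view_eq_left {σ' : List (Call n)} (h : Stutter c σ τ)
    (hx : involves c x) (hσ' : view root σ x = view root σ' x) :
    ∃ σ'' τ', view root σ' = view root σ'' ∧ view root τ x = view root τ' x ∧
      Stutter c σ'' τ' := by
  obtain ⟨α₁, α₂, β, hq, rfl, rfl⟩ := h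
  rw [view_append_cons_of_involves hx, view_append] at hσ'
  obtain ⟨ρ₁, δ, rfl, hρ₁, -, hv₁, hδ⟩ := exists_append_cons_of_view_eq hσ'.symm
  obtain ⟨δA, δB, rfl, hA, hB⟩ := exists_append_of_view_eq_append hδ
  have hδA : applySeq δA (applyCall c (applySeq ρ₁ root)) x ⊆ applyCall c (applySeq ρ₁ root) x := by
    rw [applySeq_apply_eq_of_view_eq hv₁ hA, hv₁]
    exact hq x hx
  obtain ⟨U, I, hUI, hU, hI⟩ := exists_confined_append _ δA (applyCall c (applySeq ρ₁ root))
  have hIx : ∀ r ∈ I, ¬ involves r x := fun r hr hrx => hI r hr x hrx hδA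
  have hq' : Quiet c (applyCall c (applySeq ρ₁ root)) U := fun y hy => by
    rw [applyCall_eq_of_involves hy hx]
    exact hU.applySeq_subset (applyCall_eq_of_involves hy hx).le
  have hUx : view (applyCall c (applySeq ρ₁ root)) U x =
      view (applyCall c (applySeq α₁ root)) α₂ x := by
    rw [← hA, ← congrFun hUI x, view_append, view_eq_nil_iff.2 hIx, List.append_nil]
  refine ⟨ρ₁ ++ c :: (U ++ (I ++ δB)), ρ₁ ++ c :: (U ++ c :: (I ++ δB)), ?_, ?_,
    ρ₁, U, I ++ δB, hq', rfl, rfl⟩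
  · have := view_append_left_congr (ρ₁ ++ [c]) (s := root) (σ := δA ++ δB)
      (τ := U ++ (I ++ δB)) (by
        rw [applySeq_concat, ← List.append_assoc]
        exact view_append_congr hUI.symm δB)
    simpa using this
  · rw [view_append_cons_of_involves hx, hq.view_append_cons hx, view_append_cons_of_involves hx,
      hq'.view_append_cons hx, view_append, view_eq_nil_iff.2 hIx, List.nil_append,
      ← applySeq_append, applySeq_eq_of_view_eq hUI, hB, hρ₁, hv₁, hUx]

theorem sat_iff_of_stutter (φ : Form n) :
    ∀ {c : Call n} {σ τ : List (Call n)}, Stutter c σ τ → (sat σ φ ↔ sat τ φ) := by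
  induction φ with
  | F a S =>
    intro c σ τ h
    show S ∈ applySeq σ root a ↔ S ∈ applySeq τ root a
    rw [h.applySeq_eq]
  | neg φ ih => exact fun h => not_congr (ih h)
  | and φ ψ ihφ ihψ => exact fun h => and_congr (ihφ h) (ihψ h)
  | K x φ ih =>
    intro c σ τ h
    by_cases hx : involves c x
    · rw [sat_K_iff, sat_K_iff]
      constructor
      · intro hσ τ' hτ'
        obtain ⟨σ', hσ', hst⟩ := h.exists_of_view_eq_right hx hτ'
        exact (ih hst).1 (hσ σ' hσ')
      · intro hτ σ' hσ'
        obtain ⟨σ'', τ', hσ'', hτ', hst⟩ := h.exists_of_view_eq_left hx hσ'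
        exact (sat_iff_of_view_eq hσ'' φ).2 ((ih hst).2 (hτ τ' hτ'))
    · simp only [sat_K_iff, h.view_eq_of_not_involves hx]

end Stutter

end Gossip

theorem stuttering_lemma_general {n : ℕ}
    (σ₁ σ₂ : List (Call n)) (c : Call n) (φ : Form n) :
    sat (σ₁ ++ [c] ++ σ₂) φ ↔ sat (σ₁ ++ [c] ++ [c] ++ σ₂) φ :=
  sat_iff_of_stutter φ (c := c) ⟨σ₁, [], σ₂, fun _ _ => subset_rfl, by simp, by simp⟩

/-- the Stuttering Lemma for the full epistemic language. -/
theorem stuttering_lemma {n : ℕ} (hn : 3 ≤ n)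
    (σ₁ σ₂ : List (Call n)) (c : Call n) (φ : Form n) :
    sat (σ₁ ++ [c] ++ σ₂) φ ↔ sat (σ₁ ++ [c] ++ [c] ++ σ₂) φ :=
  stuttering_lemma_general σ₁ σ₂ c φ
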